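/- Assume every global minimizer of the bending energy B in A_c is of class C²([0,L];ℝ³). Let γ ∈ A_c be of class C². If γ has a self-intersection, i.e. there are 0 ≤ s₁ < s₂ ≤ L with s₂ − s₁ < L and γ(s₁) = γ(s₂), such that γ''(s₁) does not lie in the linear span of {γ'(s₁), γ'(s₂)} (or the same holds with γ''(s₂)), then γ is not a global minimizer of B in A_c. -/

import Mathlib

/-!
If `γ` were a minimizer, then so would be every curve obtained by moving the loop `γ|[s₁, s₂]`
rigidly about the double point `γ s₁ = γ s₂` and re-gluing it with matching tangents: such a
curve is admissible and has the same energy. By hypothesis it is then `C²`, so its second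
derivative cannot jump at a junction lying in `(0, L)`, and since `s₂ - s₁ < L` one of `s₁`, `s₂`
is such a junction. Mirroring the loop in `S = span {γ' s₁, γ' s₂}` forces `γ''` into `S` at that
junction. Reversing the loop and reflecting it in the hyperplane orthogonal to `γ' s₁ + γ' s₂`,
which maps `S` onto itself and swaps `γ' s₁` with `-γ' s₂`, relates `γ'' s₁` and `γ'' s₂` by this
reflection, so `γ''` lies in `S` at the other end too.
-/

open MeasureTheory Set Filter RealInnerProductSpace

noncomputable section

/-- Euclidean 3-space. -/
abbrev R3 := EuclideanSpace ℝ (Fin 3)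

/-- The point of `ℝ³` with coordinates `(a, b, c)`. -/
def e3 (a b c : ℝ) : R3 := (WithLp.equiv 2 (Fin 3 → ℝ)).symm ![a, b, c]

/-- `γ` (restricted to `[0,L]`) is an arclength parameterized `W^{2,2}` space curve:
`γ` is `C¹` and unit-speed on `[0,L]`, `γ'` is absolutely continuous (it is recovered from
its a.e. derivative by integration), and the second derivative lies in `L²(0,L)`. -/
structure ArcCurve3 (L : ℝ) (γ : ℝ → R3) : Prop where
  c1 : ContDiffOn ℝ 1 γ (Icc 0 L)
  unit : ∀ s ∈ Icc (0:ℝ) L, ‖deriv γ s‖ = 1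
  ac : ∀ a ∈ Icc (0:ℝ) L, ∀ b ∈ Icc (0:ℝ) L,
    deriv γ b - deriv γ a = ∫ s in a..b, deriv (deriv γ) s
  l2 : MemLp (fun s => deriv (deriv γ) s) 2 (volume.restrict (Icc 0 L))

/-- The bending energy `B(γ) = ∫₀^L |γ''|² ds`. -/
def Ben (L : ℝ) (γ : ℝ → R3) : ℝ := ∫ s in Icc (0:ℝ) L, ‖deriv (deriv γ) s‖ ^ 2

/-- The `W^{2,2}`-distance between two curves on `[0,L]`. -/
def W22Dist (L : ℝ) (γ ξ : ℝ → R3) : ℝ :=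
  Real.sqrt (∫ s in Icc (0:ℝ) L, (‖γ s - ξ s‖ ^ 2 + ‖deriv γ s - deriv ξ s‖ ^ 2 +
    ‖deriv (deriv γ) s - deriv (deriv ξ) s‖ ^ 2))

/-- The admissible class `A_c` with clamped boundary conditions in `ℝ³`. -/
def Adm3 (L : ℝ) (P0 P1 V0 V1 : R3) (γ : ℝ → R3) : Prop :=
  ArcCurve3 L γ ∧ γ 0 = P0 ∧ γ L = P1 ∧ deriv γ 0 = V0 ∧ deriv γ L = V1

/-- Global minimizer of the bending energy in `A_c`. -/
def IsGlobalMin3 (L : ℝ) (P0 P1 V0 V1 : R3) (γ : ℝ → R3) : Prop :=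
  Adm3 L P0 P1 V0 V1 γ ∧ ∀ ξ, Adm3 L P0 P1 V0 V1 ξ → Ben L γ ≤ Ben L ξ

/-- Local minimizer of the bending energy in `A_c` (w.r.t. the `W^{2,2}` topology). -/
def IsLocalMin3 (L : ℝ) (P0 P1 V0 V1 : R3) (γ : ℝ → R3) : Prop :=
  Adm3 L P0 P1 V0 V1 γ ∧
    ∃ δ > 0, ∀ ξ, Adm3 L P0 P1 V0 V1 ξ → W22Dist L γ ξ < δ → Ben L γ ≤ Ben L ξ

open Topology

section Calculus

variable {E : Type*} [NormedAddCommGroup E] [NormedSpace ℝ E]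

theorem LinearIsometryEquiv.deriv_comp (U : E ≃ₗᵢ[ℝ] E) (f : ℝ → E) (x : ℝ) :
    deriv (fun t => U (f t)) x = U (deriv f x) := by
  simp only [deriv]
  rw [← Function.comp_def, U.comp_fderiv]
  rfl

theorem deriv_comp_mul_add (f : ℝ → E) (c d x : ℝ) :
    deriv (fun t => f (c * t + d)) x = c • deriv f (c * x + d) := by
  rw [deriv_comp_mul_left c (fun z => f (z + d)), deriv_comp_add_const]

theorem HasDerivAt.piecewise_of_eq {f g : ℝ → E} {f' : E} {x : ℝ} (s : Set ℝ)
    [DecidablePred (· ∈ s)] (hf : HasDerivAt f f' x) (hg : HasDerivAt g f' x) (hfg : g x = f x) :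
    HasDerivAt (s.piecewise g f) f' x := by
  have hgf : (fun y => g y - f y) =o[𝓝 x] fun y => y - x := by
    simpa [hfg, hasDerivAt_iff_isLittleO] using hg.sub hf
  rw [hasDerivAt_iff_isLittleO] at hf ⊢
  have hsplit : ∀ y, s.piecewise g f y - s.piecewise g f x - (y - x) • f' =
      (f y - f x - (y - x) • f') + s.indicator (fun y => g y - f y) y := by
    intro y
    by_cases hx : x ∈ s <;> by_cases hy : y ∈ s <;> simp [hx, hy, hfg] <;> abel
  simp_rw [hsplit]
  exact hf.add
    ((Asymptotics.isBigO_of_le _ fun y => norm_indicator_le_norm_self _ _).trans_isLittleO hgf)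

theorem eventuallyEq_piecewise_Icc {β : Type*} (f g : ℝ → β) {a b x : ℝ} (hxa : x ≠ a)
    (hxb : x ≠ b) :
    (Icc a b).piecewise g f =ᶠ[𝓝 x] if x ∈ Icc a b then g else f := by
  split_ifs with hx
  · exact (piecewise_eqOn _ _ _).eventuallyEq_of_mem
      (Icc_mem_nhds (hx.1.lt_of_ne hxa.symm) (hx.2.lt_of_ne hxb))
  · exact (piecewise_eqOn_compl _ _ _).eventuallyEq_of_mem (isClosed_Icc.isOpen_compl.mem_nhds hx)

theorem piecewise_Icc_eq_of_notMem_Ioo {β : Type*} {f g : ℝ → β} {a b x : ℝ} (ha : g a = f a)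
    (hb : g b = f b) (hx : x ∉ Ioo a b) : (Icc a b).piecewise g f x = f x := by
  by_cases hxI : x ∈ Icc a b
  · have hab : a ≤ b := hxI.1.trans hxI.2
    rcases (Icc_sdiff_Ioo_same hab ▸ ⟨hxI, hx⟩ : x ∈ ({a, b} : Set ℝ)) with rfl | rfl
    · simpa [hxI] using ha
    · simpa [hxI] using hb
  · simp [hxI]

theorem deriv_piecewise_Icc_of_ne (f g : ℝ → E) {a b x : ℝ} (hxa : x ≠ a) (hxb : x ≠ b) :
    deriv ((Icc a b).piecewise g f) x = (Icc a b).piecewise (deriv g) (deriv f) x := by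
  rw [(eventuallyEq_piecewise_Icc f g hxa hxb).deriv_eq]
  by_cases hx : x ∈ Icc a b <;> simp [hx]

theorem hasDerivAt_piecewise_Icc {f g f' g' : ℝ → E} {a b x : ℝ} (hab : a ≤ b)
    (ha : g a = f a) (hb : g b = f b) (ha' : g' a = f' a) (hb' : g' b = f' b)
    (hg : x ∈ Icc a b → HasDerivAt g (g' x) x) (hf : x ∉ Ioo a b → HasDerivAt f (f' x) x) :
    HasDerivAt ((Icc a b).piecewise g f) ((Icc a b).piecewise g' f' x) x := by
  by_cases hxa : x = a
  · subst hxa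
    have hx : x ∈ Icc x b := left_mem_Icc.2 hab
    rw [piecewise_eq_of_mem _ _ _ hx, ha']
    exact (hf fun h => h.1.false).piecewise_of_eq _ (ha' ▸ hg hx) ha
  by_cases hxb : x = b
  · subst hxb
    have hx : x ∈ Icc a x := right_mem_Icc.2 hab
    rw [piecewise_eq_of_mem _ _ _ hx, hb']
    exact (hf fun h => h.2.false).piecewise_of_eq _ (hb' ▸ hg hx) hb
  rw [(eventuallyEq_piecewise_Icc f g hxa hxb).hasDerivAt_iff]
  by_cases hx : x ∈ Icc a b
  · simpa [hx] using hg hx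
  · simpa [hx] using hf fun h => hx (Ioo_subset_Icc_self h)

theorem contDiffOn_one_Icc_iff {f : ℝ → E} {a b : ℝ} (hab : a < b)
    (hf : ∀ x ∈ Icc a b, DifferentiableAt ℝ f x) :
    ContDiffOn ℝ 1 f (Icc a b) ↔ ContinuousOn (deriv f) (Icc a b) := by
  have hEq : EqOn (derivWithin f (Icc a b)) (deriv f) (Icc a b) := fun x hx =>
    (hf x hx).derivWithin (uniqueDiffOn_Icc hab x hx)
  rw [contDiffOn_one_iff_derivWithin (uniqueDiffOn_Icc hab), continuousOn_congr hEq]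
  exact and_iff_right fun x hx => (hf x hx).differentiableWithinAt

/-- `deriv (deriv f)` is a two-sided derivative, so at an endpoint it is only meaningful where
`deriv f` is differentiable. -/
theorem tendsto_deriv_deriv_nhdsWithin_Ioo {f : ℝ → E} {a b x : ℝ} (hab : a < b)
    (hf : ContDiffOn ℝ 2 f (Icc a b)) (hfd : ∀ y ∈ Icc a b, DifferentiableAt ℝ f y)
    (hx : x ∈ Icc a b) (hx' : DifferentiableAt ℝ (deriv f) x) :
    Tendsto (deriv (deriv f)) (𝓝[Ioo a b] x) (𝓝 (deriv (deriv f) x)) := by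
  have uD := uniqueDiffOn_Icc hab
  have h1 : ContDiffOn ℝ 1 (deriv f) (Icc a b) :=
    (hf.derivWithin uD (by norm_num)).congr fun y hy => ((hfd y hy).derivWithin (uD y hy)).symm
  have hD := ((h1.continuousOn_derivWithin uD le_rfl).continuousWithinAt hx).mono
    Ioo_subset_Icc_self
  rw [ContinuousWithinAt, hx'.derivWithin (uD x hx)] at hD
  exact hD.congr' (eventuallyEq_of_mem self_mem_nhdsWithin fun y hy =>
    derivWithin_of_mem_nhds (Icc_mem_nhds hy.1 hy.2))

theorem ContDiffAt.differentiableAt_deriv {f : ℝ → E} {x : ℝ} (hf : ContDiffAt ℝ 2 f x) :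
    DifferentiableAt ℝ (deriv f) x :=
  (hf.derivWithin (m := 1) (by norm_num)).differentiableAt one_ne_zero

theorem ContDiffAt.eq_of_tendsto_deriv_deriv {f : ℝ → E} {x : ℝ} (hf : ContDiffAt ℝ 2 f x)
    {A B : E} (hA : Tendsto (deriv (deriv f)) (𝓝[<] x) (𝓝 A))
    (hB : Tendsto (deriv (deriv f)) (𝓝[>] x) (𝓝 B)) : A = B := by
  have hc : ContinuousAt (deriv (deriv f)) x :=
    ((hf.derivWithin (m := 1) (by norm_num)).derivWithin (m := 0) (by norm_num)).continuousAt
  rw [tendsto_nhds_unique hA (hc.tendsto.mono_left nhdsWithin_le_nhds),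
    tendsto_nhds_unique hB (hc.tendsto.mono_left nhdsWithin_le_nhds)]

end Calculus

section Primitive

variable {E : Type*} [NormedAddCommGroup E] [NormedSpace ℝ E]

def IsPrimitiveOn (F f : ℝ → E) (s : Set ℝ) : Prop :=
  ∀ x ∈ s, ∀ y ∈ s, F y - F x = ∫ t in x..y, f t

namespace IsPrimitiveOn

variable {F G f g : ℝ → E} {s t : Set ℝ}

theorem mono (h : IsPrimitiveOn F f t) (hst : s ⊆ t) : IsPrimitiveOn F f s :=
  fun x hx y hy => h x (hst hx) y (hst hy)

theorem congr [s.OrdConnected] (h : IsPrimitiveOn F f s) (hF : EqOn F G s)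
    (hf : ∀ᵐ x, x ∈ s → f x = g x) : IsPrimitiveOn G g s := by
  intro x hx y hy
  rw [← hF hx, ← hF hy, h x hx y hy]
  exact intervalIntegral.integral_congr_ae (hf.mono fun t ht htI =>
    ht (Set.OrdConnected.uIcc_subset ‹_› hx hy (uIoc_subset_uIcc htI)))

theorem union_Icc {p q r : ℝ} (hpq : p ≤ q) (hqr : q ≤ r) (h₁ : IsPrimitiveOn F f (Icc p q))
    (h₂ : IsPrimitiveOn F f (Icc q r)) (hf : IntervalIntegrable f volume p r) :
    IsPrimitiveOn F f (Icc p r) := by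
  have hq : q ∈ Icc p r := ⟨hpq, hqr⟩
  have hint : ∀ y ∈ Icc p r, IntervalIntegrable f volume q y := fun y hy =>
    hf.mono_set <| uIcc_subset_uIcc (by rwa [uIcc_of_le (hpq.trans hqr)])
      (by rwa [uIcc_of_le (hpq.trans hqr)])
  have hfrom : ∀ y ∈ Icc p r, F y - F q = ∫ t in q..y, f t := by
    intro y hy
    rcases le_total y q with hyq | hqy
    · exact h₁ q ⟨hpq, le_rfl⟩ y ⟨hy.1, hyq⟩
    · exact h₂ q ⟨le_rfl, hqr⟩ y ⟨hqy, hy.2⟩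
  intro x hx y hy
  rw [← intervalIntegral.integral_interval_sub_left (hint y hy) (hint x hx), ← hfrom x hx,
    ← hfrom y hy]
  abel

theorem const_smul (h : IsPrimitiveOn F f s) (c : ℝ) :
    IsPrimitiveOn (fun x => c • F x) (fun x => c • f x) s := by
  intro x hx y hy
  rw [← smul_sub, h x hx y hy, intervalIntegral.integral_smul]

theorem comp_mul_add (h : IsPrimitiveOn F f s) {c : ℝ} (hc : c ≠ 0) (d : ℝ) :
    IsPrimitiveOn (fun x => F (c * x + d)) (fun x => c • f (c * x + d))
      ((fun x => c * x + d) ⁻¹' s) := by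
  intro x hx y hy
  rw [h _ hx _ hy, intervalIntegral.integral_smul, intervalIntegral.integral_comp_mul_add _ hc,
    smul_inv_smul₀ hc]

theorem map [CompleteSpace E] {E' : Type*} [NormedAddCommGroup E'] [NormedSpace ℝ E']
    [CompleteSpace E'] (h : IsPrimitiveOn F f s) (U : E →L[ℝ] E')
    (hf : ∀ x ∈ s, ∀ y ∈ s, IntervalIntegrable f volume x y) :
    IsPrimitiveOn (fun x => U (F x)) (fun x => U (f x)) s := by
  intro x hx y hy
  rw [← map_sub, h x hx y hy, U.intervalIntegral_comp_comm (hf x hx y hy)]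

end IsPrimitiveOn

end Primitive

section LoopReparam

/-- For `ε = 1` the identity, for `ε = -1` the reversal `t ↦ a + b - t` of `[a, b]`. -/
def loopReparam (ε a b t : ℝ) : ℝ := ε * t + (1 - ε) * ((a + b) / 2)

variable {ε a b : ℝ}

@[simp]
theorem loopReparam_one (t : ℝ) : loopReparam 1 a b t = t := by
  simp [loopReparam]

@[simp]
theorem loopReparam_neg_one (t : ℝ) : loopReparam (-1) a b t = a + b - t := by
  unfold loopReparam
  ring

theorem continuous_loopReparam : Continuous (loopReparam ε a b) := by
  unfold loopReparam
  fun_prop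

theorem hasDerivAt_loopReparam (t : ℝ) : HasDerivAt (loopReparam ε a b) ε t := by
  unfold loopReparam
  exact (((hasDerivAt_id' t).const_mul ε).add_const _).congr_deriv (mul_one ε)

theorem loopReparam_mem_Icc_iff (hε : ε = 1 ∨ ε = -1) {t : ℝ} :
    loopReparam ε a b t ∈ Icc a b ↔ t ∈ Icc a b := by
  rcases hε with rfl | rfl
  · simp
  · simp only [loopReparam_neg_one, mem_Icc]
    constructor <;> rintro ⟨h₁, h₂⟩ <;> constructor <;> linarith

theorem loopReparam_mem_Ioo_iff (hε : ε = 1 ∨ ε = -1) {t : ℝ} :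
    loopReparam ε a b t ∈ Ioo a b ↔ t ∈ Ioo a b := by
  rcases hε with rfl | rfl
  · simp
  · simp only [loopReparam_neg_one, mem_Ioo]
    constructor <;> rintro ⟨h₁, h₂⟩ <;> constructor <;> linarith

theorem apply_loopReparam_left {β : Type*} {γ : ℝ → β} (hε : ε = 1 ∨ ε = -1)
    (hγ : γ a = γ b) : γ (loopReparam ε a b a) = γ a := by
  rcases hε with rfl | rfl <;> simp [hγ]

theorem apply_loopReparam_right {β : Type*} {γ : ℝ → β} (hε : ε = 1 ∨ ε = -1)
    (hγ : γ a = γ b) : γ (loopReparam ε a b b) = γ a := by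
  rcases hε with rfl | rfl <;> simp [hγ]

theorem measurePreserving_loopReparam (hε : ε = 1 ∨ ε = -1) :
    MeasurePreserving (loopReparam ε a b) (volume.restrict (Icc a b))
      (volume.restrict (Icc a b)) := by
  have h : MeasurePreserving (loopReparam ε a b) volume volume := by
    rcases hε with rfl | rfl
    · rw [show loopReparam 1 a b = id from funext loopReparam_one]
      exact MeasurePreserving.id volume
    · simpa [funext loopReparam_neg_one] using Measure.measurePreserving_sub_left volume (a + b)
  have hpre : loopReparam ε a b ⁻¹' Icc a b = Icc a b := ext fun t => loopReparam_mem_Icc_iff hε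
  simpa [hpre] using h.restrict_preimage measurableSet_Icc (s := Icc a b)

end LoopReparam

section LoopSurgery

variable {E : Type*} [NormedAddCommGroup E] [NormedSpace ℝ E]

theorem deriv_comp_loopReparam {ε a b : ℝ} (f : ℝ → E) (x : ℝ) :
    deriv (fun t => f (loopReparam ε a b t)) x = ε • deriv f (loopReparam ε a b x) :=
  deriv_comp_mul_add f ε _ x

def loopSurgery (γ : ℝ → E) (U : E ≃ₗᵢ[ℝ] E) (ε a b : ℝ) : ℝ → E :=
  (Icc a b).piecewise (fun t => γ a + U (γ (loopReparam ε a b t) - γ a)) γ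

def loopSurgeryVelocity (γ : ℝ → E) (U : E ≃ₗᵢ[ℝ] E) (ε a b : ℝ) : ℝ → E :=
  (Icc a b).piecewise (fun t => ε • U (deriv γ (loopReparam ε a b t))) (deriv γ)

def loopSurgeryAccel (γ : ℝ → E) (U : E ≃ₗᵢ[ℝ] E) (ε a b : ℝ) : ℝ → E :=
  (Icc a b).piecewise (fun t => U (deriv (deriv γ) (loopReparam ε a b t))) (deriv (deriv γ))

structure LoopSurgeryData (L : ℝ) (γ : ℝ → E) (U : E ≃ₗᵢ[ℝ] E) (ε a b : ℝ) : Prop where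
  sign : ε = 1 ∨ ε = -1
  nonneg : 0 ≤ a
  lt : a < b
  le : b ≤ L
  loop : γ a = γ b
  deriv_left : ε • U (deriv γ (loopReparam ε a b a)) = deriv γ a
  deriv_right : ε • U (deriv γ (loopReparam ε a b b)) = deriv γ b

variable {γ : ℝ → E} {U : E ≃ₗᵢ[ℝ] E} {ε a b L : ℝ}

theorem memLp_loopSurgeryAccel (hε : ε = 1 ∨ ε = -1) (hsub : Icc a b ⊆ Icc 0 L) {p : ENNReal}
    (hγ : MemLp (deriv (deriv γ)) p (volume.restrict (Icc 0 L))) :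
    MemLp (loopSurgeryAccel γ U ε a b) p (volume.restrict (Icc 0 L)) := by
  refine MemLp.piecewise measurableSet_Icc ?_ (hγ.mono_measure Measure.restrict_le_self)
  rw [Measure.restrict_restrict measurableSet_Icc, inter_eq_left.2 hsub]
  exact (U.toContinuousLinearEquiv : E →L[ℝ] E).comp_memLp'
    ((hγ.mono_measure (Measure.restrict_mono hsub le_rfl)).comp_measurePreserving
      (measurePreserving_loopReparam hε))

theorem integral_norm_loopSurgeryAccel_sq (hε : ε = 1 ∨ ε = -1) (hsub : Icc a b ⊆ Icc 0 L)
    (hγ : MemLp (deriv (deriv γ)) 2 (volume.restrict (Icc 0 L))) :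
    ∫ t in Icc 0 L, ‖loopSurgeryAccel γ U ε a b t‖ ^ 2 =
      ∫ t in Icc 0 L, ‖deriv (deriv γ) t‖ ^ 2 := by
  have hrestr : (volume.restrict (Icc 0 L)).restrict (Icc a b) = volume.restrict (Icc a b) := by
    rw [Measure.restrict_restrict measurableSet_Icc, inter_eq_left.2 hsub]
  have hmp := measurePreserving_loopReparam hε (a := a) (b := b)
  have hmeas :
      AEStronglyMeasurable (fun t => ‖deriv (deriv γ) t‖ ^ 2) (volume.restrict (Icc a b)) :=
    hrestr ▸ (hγ.integrable_norm_pow two_ne_zero).aestronglyMeasurable.restrict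
  rw [← integral_add_compl measurableSet_Icc
      ((memLp_loopSurgeryAccel hε hsub hγ (U := U)).integrable_norm_pow two_ne_zero),
    ← integral_add_compl measurableSet_Icc (hγ.integrable_norm_pow two_ne_zero), hrestr]
  congr 1
  · calc ∫ t in Icc a b, ‖loopSurgeryAccel γ U ε a b t‖ ^ 2
        = ∫ t in Icc a b, ‖deriv (deriv γ) (loopReparam ε a b t)‖ ^ 2 :=
          setIntegral_congr_fun measurableSet_Icc fun t ht => by simp [loopSurgeryAccel, ht]
      _ = ∫ t in Icc a b, ‖deriv (deriv γ) t‖ ^ 2 := by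
          have h := integral_map (f := fun t => ‖deriv (deriv γ) t‖ ^ 2)
            hmp.measurable.aemeasurable (hmp.map_eq ▸ hmeas)
          rwa [hmp.map_eq, eq_comm] at h
  · exact setIntegral_congr_fun measurableSet_Icc.compl fun t ht => by
      rw [loopSurgeryAccel, piecewise_eq_of_notMem _ _ _ ht]

namespace LoopSurgeryData

theorem Icc_subset (h : LoopSurgeryData L γ U ε a b) : Icc a b ⊆ Icc 0 L :=
  Icc_subset_Icc h.nonneg h.le

theorem loopSurgery_left (h : LoopSurgeryData L γ U ε a b) :
    γ a + U (γ (loopReparam ε a b a) - γ a) = γ a := by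
  simp [apply_loopReparam_left h.sign h.loop]

theorem loopSurgery_right (h : LoopSurgeryData L γ U ε a b) :
    γ a + U (γ (loopReparam ε a b b) - γ a) = γ b := by
  simp [apply_loopReparam_right h.sign h.loop, h.loop]

theorem loopSurgery_eq_of_notMem_Ioo (h : LoopSurgeryData L γ U ε a b) {x : ℝ}
    (hx : x ∉ Ioo a b) :
    loopSurgery γ U ε a b x = γ x :=
  piecewise_Icc_eq_of_notMem_Ioo h.loopSurgery_left h.loopSurgery_right hx

theorem loopSurgeryVelocity_eq_of_notMem_Ioo (h : LoopSurgeryData L γ U ε a b) {x : ℝ}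
    (hx : x ∉ Ioo a b) :
    loopSurgeryVelocity γ U ε a b x = deriv γ x :=
  piecewise_Icc_eq_of_notMem_Ioo h.deriv_left h.deriv_right hx

theorem hasDerivAt_loopSurgery (h : LoopSurgeryData L γ U ε a b)
    (hd : ∀ t ∈ Icc 0 L, DifferentiableAt ℝ γ t) {x : ℝ} (hx : x ∈ Icc 0 L) :
    HasDerivAt (loopSurgery γ U ε a b) (loopSurgeryVelocity γ U ε a b x) x := by
  refine hasDerivAt_piecewise_Icc h.lt.le h.loopSurgery_left h.loopSurgery_right h.deriv_left
    h.deriv_right (fun hxI => ?_) fun _ => (hd x hx).hasDerivAt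
  have hτ := (hd _ (h.Icc_subset ((loopReparam_mem_Icc_iff h.sign).2 hxI))).hasDerivAt.scomp x
    (hasDerivAt_loopReparam x)
  simpa using (U.toContinuousLinearEquiv.hasFDerivAt.comp_hasDerivAt x
    (hτ.sub_const (γ a))).const_add (γ a)

theorem deriv_loopSurgery (h : LoopSurgeryData L γ U ε a b)
    (hd : ∀ t ∈ Icc 0 L, DifferentiableAt ℝ γ t) :
    EqOn (deriv (loopSurgery γ U ε a b)) (loopSurgeryVelocity γ U ε a b) (Icc 0 L) :=
  fun _ hx => (h.hasDerivAt_loopSurgery hd hx).deriv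

theorem deriv_deriv_loopSurgery (h : LoopSurgeryData L γ U ε a b)
    (hd : ∀ t ∈ Icc 0 L, DifferentiableAt ℝ γ t) {x : ℝ} (hx : x ∈ Ioo 0 L) (hxa : x ≠ a)
    (hxb : x ≠ b) :
    deriv (deriv (loopSurgery γ U ε a b)) x = loopSurgeryAccel γ U ε a b x := by
  rw [((h.deriv_loopSurgery hd).eventuallyEq_of_mem (Icc_mem_nhds hx.1 hx.2)).deriv_eq,
    loopSurgeryVelocity, deriv_piecewise_Icc_of_ne _ _ hxa hxb, loopSurgeryAccel]
  by_cases hxI : x ∈ Icc a b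
  · have hεε : ε * ε = 1 := by rcases h.sign with rfl | rfl <;> norm_num
    simp only [piecewise_eq_of_mem _ _ _ hxI]
    rw [deriv_fun_const_smul_field, U.deriv_comp, deriv_comp_loopReparam, map_smul, smul_smul,
      hεε, one_smul]
  · simp only [piecewise_eq_of_notMem _ _ _ hxI]

theorem deriv_deriv_loopSurgery_ae (h : LoopSurgeryData L γ U ε a b)
    (hd : ∀ t ∈ Icc 0 L, DifferentiableAt ℝ γ t) :
    deriv (deriv (loopSurgery γ U ε a b)) =ᵐ[volume.restrict (Icc 0 L)]
      loopSurgeryAccel γ U ε a b := by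
  rw [EventuallyEq, ae_restrict_iff' measurableSet_Icc]
  filter_upwards [(toFinite {0, L, a, b}).countable.ae_notMem volume] with x hx hxI
  simp only [mem_insert_iff, mem_singleton_iff, not_or] at hx
  exact h.deriv_deriv_loopSurgery hd ⟨hxI.1.lt_of_ne (Ne.symm hx.1), hxI.2.lt_of_ne hx.2.1⟩
    hx.2.2.1 hx.2.2.2

theorem continuousOn_loopSurgeryVelocity (h : LoopSurgeryData L γ U ε a b)
    (hγ' : ContinuousOn (deriv γ) (Icc 0 L)) :
    ContinuousOn (loopSurgeryVelocity γ U ε a b) (Icc 0 L) := by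
  refine ContinuousOn.piecewise ?_ ?_ (hγ'.mono inter_subset_left)
  · rintro x ⟨-, hx⟩
    rw [frontier_Icc h.lt.le] at hx
    rcases hx with rfl | rfl
    exacts [h.deriv_left, h.deriv_right]
  · rw [closure_Icc]
    refine (ContinuousOn.const_smul (U.continuous.comp_continuousOn ?_) ε).mono
      inter_subset_right
    exact (hγ'.mono h.Icc_subset).comp continuous_loopReparam.continuousOn
      fun t ht => (loopReparam_mem_Icc_iff h.sign).2 ht

theorem isPrimitiveOn_loopSurgeryVelocity_of_disjoint (h : LoopSurgeryData L γ U ε a b)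
    (hγ : IsPrimitiveOn (deriv γ) (deriv (deriv γ)) (Icc 0 L)) {s : Set ℝ} [s.OrdConnected]
    (hs : s ⊆ Icc 0 L) (hsab : Disjoint s (Ioo a b)) :
    IsPrimitiveOn (loopSurgeryVelocity γ U ε a b) (loopSurgeryAccel γ U ε a b) s := by
  refine (hγ.mono hs).congr (fun t ht =>
    (h.loopSurgeryVelocity_eq_of_notMem_Ioo (disjoint_left.1 hsab ht)).symm) ?_
  filter_upwards [(toFinite {a, b}).countable.ae_notMem volume] with t htab hts
  refine (piecewise_eq_of_notMem _ _ _ fun htI => disjoint_left.1 hsab hts ?_).symm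
  exact ⟨htI.1.lt_of_ne fun h => htab (Or.inl h.symm), htI.2.lt_of_ne fun h => htab (Or.inr h)⟩

theorem isPrimitiveOn_loopSurgeryVelocity_Icc [CompleteSpace E] (h : LoopSurgeryData L γ U ε a b)
    (hγ : IsPrimitiveOn (deriv γ) (deriv (deriv γ)) (Icc 0 L))
    (hint : IntegrableOn (deriv (deriv γ)) (Icc 0 L)) :
    IsPrimitiveOn (loopSurgeryVelocity γ U ε a b) (loopSurgeryAccel γ U ε a b) (Icc a b) := by
  have hε0 : ε ≠ 0 := by rcases h.sign with rfl | rfl <;> norm_num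
  have hUγ := (hγ.mono h.Icc_subset).map (U.toContinuousLinearEquiv : E →L[ℝ] E) fun x hx y hy =>
    (hint.mono_set ((uIcc_subset_Icc hx hy).trans h.Icc_subset)).intervalIntegrable
  have hU := (hUγ.comp_mul_add hε0 ((1 - ε) * ((a + b) / 2))).const_smul ε
  rw [show (fun x => ε * x + (1 - ε) * ((a + b) / 2)) ⁻¹' Icc a b = Icc a b from
    ext fun t => loopReparam_mem_Icc_iff h.sign] at hU
  refine hU.congr (fun t ht => by simp [loopSurgeryVelocity, ht, loopReparam])
    (ae_of_all _ fun t ht => ?_)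
  rcases h.sign with rfl | rfl <;> simp [loopSurgeryAccel, ht, loopReparam]

theorem isPrimitiveOn_loopSurgeryVelocity [CompleteSpace E] (h : LoopSurgeryData L γ U ε a b)
    (hγ : IsPrimitiveOn (deriv γ) (deriv (deriv γ)) (Icc 0 L))
    (hint : IntegrableOn (deriv (deriv γ)) (Icc 0 L)) :
    IsPrimitiveOn (loopSurgeryVelocity γ U ε a b) (loopSurgeryAccel γ U ε a b) (Icc 0 L) := by
  have hL : 0 ≤ L := h.nonneg.trans (h.lt.le.trans h.le)
  have hA : IntegrableOn (loopSurgeryAccel γ U ε a b) (Icc 0 L) := memLp_one_iff_integrable.1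
    (memLp_loopSurgeryAccel h.sign h.Icc_subset (memLp_one_iff_integrable.2 hint))
  have hII : ∀ c ∈ Icc 0 L, IntervalIntegrable (loopSurgeryAccel γ U ε a b) volume 0 c :=
    fun c hc => (hA.mono_set (uIcc_subset_Icc ⟨le_rfl, hL⟩ hc)).intervalIntegrable
  have hleft := h.isPrimitiveOn_loopSurgeryVelocity_of_disjoint hγ (Icc_subset_Icc_right
    (h.lt.le.trans h.le)) (disjoint_left.2 fun t ht ht' => ht'.1.not_ge ht.2)
  have hright := h.isPrimitiveOn_loopSurgeryVelocity_of_disjoint hγ (Icc_subset_Icc_left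
    (h.nonneg.trans h.lt.le)) (disjoint_left.2 fun t ht ht' => ht'.2.not_ge ht.1)
  exact (hleft.union_Icc h.nonneg h.lt.le (h.isPrimitiveOn_loopSurgeryVelocity_Icc hγ hint)
    (hII b (h.Icc_subset (right_mem_Icc.2 h.lt.le)))).union_Icc (h.nonneg.trans h.lt.le) h.le
      hright (hII L ⟨hL, le_rfl⟩)

theorem tendsto_deriv_deriv_comp_loopReparam (h : LoopSurgeryData L γ U ε a b)
    (hC2 : ContDiffOn ℝ 2 γ (Icc 0 L)) (hd : ∀ t ∈ Icc 0 L, DifferentiableAt ℝ γ t)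
    {x : ℝ} (hx : x ∈ Icc a b) (hτx : DifferentiableAt ℝ (deriv γ) (loopReparam ε a b x)) :
    Tendsto (fun t => deriv (deriv γ) (loopReparam ε a b t)) (𝓝[Ioo a b] x)
      (𝓝 (deriv (deriv γ) (loopReparam ε a b x))) := by
  refine (tendsto_deriv_deriv_nhdsWithin_Ioo ((h.nonneg.trans_lt h.lt).trans_le h.le) hC2 hd
    (h.Icc_subset ((loopReparam_mem_Icc_iff h.sign).2 hx)) hτx).comp ?_
  exact tendsto_nhdsWithin_iff.2 ⟨continuous_loopReparam.continuousWithinAt.tendsto,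
    eventually_of_mem self_mem_nhdsWithin fun t ht =>
      Ioo_subset_Ioo h.nonneg h.le ((loopReparam_mem_Ioo_iff h.sign).2 ht)⟩

theorem deriv_deriv_left (h : LoopSurgeryData L γ U ε a b) (ha : 0 < a)
    (hC2 : ContDiffOn ℝ 2 γ (Icc 0 L)) (hd : ∀ t ∈ Icc 0 L, DifferentiableAt ℝ γ t)
    (hξ : ContDiffOn ℝ 2 (loopSurgery γ U ε a b) (Icc 0 L))
    (hτa : DifferentiableAt ℝ (deriv γ) (loopReparam ε a b a)) :
    U (deriv (deriv γ) (loopReparam ε a b a)) = deriv (deriv γ) a := by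
  have haL : a ∈ Ioo 0 L := ⟨ha, h.lt.trans_le h.le⟩
  refine ((hξ.contDiffAt (Icc_mem_nhds haL.1 haL.2)).eq_of_tendsto_deriv_deriv ?_ ?_).symm
  · have hγa := tendsto_deriv_deriv_nhdsWithin_Ioo (ha.trans haL.2) hC2 hd
      (Ioo_subset_Icc_self haL) (hC2.contDiffAt (Icc_mem_nhds haL.1 haL.2)).differentiableAt_deriv
    rw [← nhdsWithin_Ioo_eq_nhdsLT ha]
    refine (hγa.mono_left (nhdsWithin_mono _ (Ioo_subset_Ioo_right haL.2.le))).congr'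
      (eventually_of_mem self_mem_nhdsWithin fun t ht => ?_)
    rw [h.deriv_deriv_loopSurgery hd ⟨ht.1, ht.2.trans haL.2⟩ ht.2.ne (ht.2.trans h.lt).ne,
      loopSurgeryAccel, piecewise_eq_of_notMem _ _ _ fun h' => ht.2.not_ge h'.1]
  · rw [← nhdsWithin_Ioo_eq_nhdsGT h.lt]
    refine ((U.continuous.tendsto _).comp (h.tendsto_deriv_deriv_comp_loopReparam hC2 hd
      (left_mem_Icc.2 h.lt.le) hτa)).congr'
        (eventually_of_mem self_mem_nhdsWithin fun t ht => ?_)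
    rw [h.deriv_deriv_loopSurgery hd (Ioo_subset_Ioo h.nonneg h.le ht) ht.1.ne' ht.2.ne,
      loopSurgeryAccel, piecewise_eq_of_mem _ _ _ (Ioo_subset_Icc_self ht)]
    rfl

theorem deriv_deriv_right (h : LoopSurgeryData L γ U ε a b) (hb : b < L)
    (hC2 : ContDiffOn ℝ 2 γ (Icc 0 L)) (hd : ∀ t ∈ Icc 0 L, DifferentiableAt ℝ γ t)
    (hξ : ContDiffOn ℝ 2 (loopSurgery γ U ε a b) (Icc 0 L))
    (hτb : DifferentiableAt ℝ (deriv γ) (loopReparam ε a b b)) :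
    U (deriv (deriv γ) (loopReparam ε a b b)) = deriv (deriv γ) b := by
  have hbL : b ∈ Ioo 0 L := ⟨h.nonneg.trans_lt h.lt, hb⟩
  refine (hξ.contDiffAt (Icc_mem_nhds hbL.1 hbL.2)).eq_of_tendsto_deriv_deriv ?_ ?_
  · rw [← nhdsWithin_Ioo_eq_nhdsLT h.lt]
    refine ((U.continuous.tendsto _).comp (h.tendsto_deriv_deriv_comp_loopReparam hC2 hd
      (right_mem_Icc.2 h.lt.le) hτb)).congr'
        (eventually_of_mem self_mem_nhdsWithin fun t ht => ?_)
    rw [h.deriv_deriv_loopSurgery hd (Ioo_subset_Ioo h.nonneg h.le ht) ht.1.ne' ht.2.ne,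
      loopSurgeryAccel, piecewise_eq_of_mem _ _ _ (Ioo_subset_Icc_self ht)]
    rfl
  · have hγb := tendsto_deriv_deriv_nhdsWithin_Ioo (hbL.1.trans hb) hC2 hd
      (Ioo_subset_Icc_self hbL) (hC2.contDiffAt (Icc_mem_nhds hbL.1 hbL.2)).differentiableAt_deriv
    rw [← nhdsWithin_Ioo_eq_nhdsGT hb]
    refine (hγb.mono_left (nhdsWithin_mono _ (Ioo_subset_Ioo_left hbL.1.le))).congr'
      (eventually_of_mem self_mem_nhdsWithin fun t ht => ?_)
    rw [h.deriv_deriv_loopSurgery hd ⟨hbL.1.trans ht.1, ht.2⟩ (h.lt.trans ht.1).ne' ht.1.ne',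
      loopSurgeryAccel, piecewise_eq_of_notMem _ _ _ fun h' => ht.1.not_ge h'.2]

end LoopSurgeryData

end LoopSurgery

section Reflections

variable {F : Type*} [NormedAddCommGroup F] [InnerProductSpace ℝ F] {v w : F}

namespace Submodule

theorem reflection_orthogonal_span_add_left (h : ‖v‖ = ‖w‖) :
    (ℝ ∙ (v + w))ᗮ.reflection v = -w := by
  simpa using reflection_sub (v := v) (w := -w) (by rwa [norm_neg])

theorem reflection_orthogonal_span_add_right (h : ‖v‖ = ‖w‖) :
    (ℝ ∙ (v + w))ᗮ.reflection w = -v := by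
  rw [add_comm]
  exact reflection_orthogonal_span_add_left h.symm

theorem reflection_orthogonal_span_add_mem_span_pair_iff (h : ‖v‖ = ‖w‖) {x : F} :
    (ℝ ∙ (v + w))ᗮ.reflection x ∈ span ℝ {v, w} ↔ x ∈ span ℝ {v, w} := by
  have hmaps : ∀ y ∈ span ℝ {v, w}, (ℝ ∙ (v + w))ᗮ.reflection y ∈ span ℝ {v, w} := by
    intro y hy
    obtain ⟨α, β, rfl⟩ := mem_span_pair.1 hy
    rw [map_add, map_smul, map_smul, reflection_orthogonal_span_add_left h,
      reflection_orthogonal_span_add_right h]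
    exact mem_span_pair.2 ⟨-β, -α, by simp only [neg_smul, smul_neg]; abel⟩
  refine ⟨fun hx => ?_, hmaps x⟩
  simpa using hmaps _ hx

end Submodule

variable {γ : ℝ → F} {L s₁ s₂ : ℝ}

theorem loopSurgeryData_reflection_span [FiniteDimensional ℝ F] (h₀ : 0 ≤ s₁) (h₁₂ : s₁ < s₂)
    (h₂ : s₂ ≤ L) (hγ : γ s₁ = γ s₂) :
    LoopSurgeryData L γ (Submodule.span ℝ {deriv γ s₁, deriv γ s₂}).reflection 1 s₁ s₂ :=
  ⟨Or.inl rfl, h₀, h₁₂, h₂, hγ,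
    by simpa using Submodule.reflection_mem_subspace_eq_self (Submodule.subset_span (by simp)),
    by simpa using Submodule.reflection_mem_subspace_eq_self (Submodule.subset_span (by simp))⟩

theorem loopSurgeryData_reflection_orthogonal_span_add (h₀ : 0 ≤ s₁) (h₁₂ : s₁ < s₂)
    (h₂ : s₂ ≤ L) (hγ : γ s₁ = γ s₂) (hT : ‖deriv γ s₁‖ = ‖deriv γ s₂‖) :
    LoopSurgeryData L γ (ℝ ∙ (deriv γ s₁ + deriv γ s₂))ᗮ.reflection (-1) s₁ s₂ :=
  ⟨Or.inr rfl, h₀, h₁₂, h₂, hγ,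
    by simp [Submodule.reflection_orthogonal_span_add_right hT],
    by simp [Submodule.reflection_orthogonal_span_add_left hT]⟩

end Reflections

namespace ArcCurve3

variable {L : ℝ} {γ : ℝ → R3} {U : R3 ≃ₗᵢ[ℝ] R3} {ε a b : ℝ}

theorem differentiableAt (hγ : ArcCurve3 L γ) {t : ℝ} (ht : t ∈ Icc 0 L) :
    DifferentiableAt ℝ γ t :=
  differentiableAt_of_deriv_ne_zero (norm_ne_zero_iff.1 (by rw [hγ.unit t ht]; exact one_ne_zero))

theorem ben_loopSurgery (hγ : ArcCurve3 L γ) (h : LoopSurgeryData L γ U ε a b) :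
    Ben L (loopSurgery γ U ε a b) = Ben L γ := by
  refine (integral_congr_ae ((h.deriv_deriv_loopSurgery_ae fun t ht =>
    hγ.differentiableAt ht).fun_comp fun v => ‖v‖ ^ 2)).trans ?_
  exact integral_norm_loopSurgeryAccel_sq h.sign h.Icc_subset hγ.l2

theorem loopSurgery (hγ : ArcCurve3 L γ) (h : LoopSurgeryData L γ U ε a b) :
    ArcCurve3 L (loopSurgery γ U ε a b) := by
  have hL : 0 < L := (h.nonneg.trans_lt h.lt).trans_le h.le
  have hd : ∀ t ∈ Icc 0 L, DifferentiableAt ℝ γ t := fun t ht => hγ.differentiableAt ht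
  have hvel := h.deriv_loopSurgery hd
  have hacc := h.deriv_deriv_loopSurgery_ae hd
  refine ⟨?_, fun t ht => ?_, ?_, ?_⟩
  · rw [contDiffOn_one_Icc_iff hL fun t ht => (h.hasDerivAt_loopSurgery hd ht).differentiableAt]
    exact (h.continuousOn_loopSurgeryVelocity ((contDiffOn_one_Icc_iff hL hd).1 hγ.c1)).congr
      hvel
  · rw [hvel ht, loopSurgeryVelocity]
    by_cases htI : t ∈ Icc a b
    · have hε : |ε| = 1 := by rcases h.sign with rfl | rfl <;> norm_num
      rw [piecewise_eq_of_mem _ _ _ htI, norm_smul, U.norm_map, Real.norm_eq_abs, hε, one_mul,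
        hγ.unit _ (h.Icc_subset ((loopReparam_mem_Icc_iff h.sign).2 htI))]
    · rw [piecewise_eq_of_notMem _ _ _ htI, hγ.unit t ht]
  · exact (h.isPrimitiveOn_loopSurgeryVelocity hγ.ac (hγ.l2.integrable one_le_two)).congr
      hvel.symm ((ae_restrict_iff' measurableSet_Icc).1 hacc.symm)
  · exact (memLp_loopSurgeryAccel h.sign h.Icc_subset hγ.l2).ae_eq hacc.symm

end ArcCurve3

namespace IsGlobalMin3

variable {L : ℝ} {P0 P1 V0 V1 : R3} {γ : ℝ → R3}

theorem loopSurgery {U : R3 ≃ₗᵢ[ℝ] R3} {ε a b : ℝ} (hmin : IsGlobalMin3 L P0 P1 V0 V1 γ)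
    (h : LoopSurgeryData L γ U ε a b) : IsGlobalMin3 L P0 P1 V0 V1 (loopSurgery γ U ε a b) := by
  obtain ⟨⟨hγ, hP0, hP1, hV0, hV1⟩, hle⟩ := hmin
  have hd : ∀ t ∈ Icc 0 L, DifferentiableAt ℝ γ t := fun t ht => hγ.differentiableAt ht
  have hL0 : 0 ≤ L := h.nonneg.trans (h.lt.le.trans h.le)
  have h0 : (0 : ℝ) ∉ Ioo a b := fun h' => h.nonneg.not_gt h'.1
  have hL : L ∉ Ioo a b := fun h' => h.le.not_gt h'.2
  refine ⟨⟨hγ.loopSurgery h, ?_, ?_, ?_, ?_⟩, fun ξ hξ => hγ.ben_loopSurgery h ▸ hle ξ hξ⟩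
  · rw [h.loopSurgery_eq_of_notMem_Ioo h0, hP0]
  · rw [h.loopSurgery_eq_of_notMem_Ioo hL, hP1]
  · rw [h.deriv_loopSurgery hd ⟨le_rfl, hL0⟩, h.loopSurgeryVelocity_eq_of_notMem_Ioo h0, hV0]
  · rw [h.deriv_loopSurgery hd ⟨hL0, le_rfl⟩, h.loopSurgeryVelocity_eq_of_notMem_Ioo hL, hV1]

variable {s₁ s₂ : ℝ}

theorem deriv_deriv_mem_span_of_pos (hmin : IsGlobalMin3 L P0 P1 V0 V1 γ)
    (H : ∀ ξ, IsGlobalMin3 L P0 P1 V0 V1 ξ → ContDiffOn ℝ 2 ξ (Icc 0 L))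
    (hC2 : ContDiffOn ℝ 2 γ (Icc 0 L)) (h₀ : 0 < s₁) (h₁₂ : s₁ < s₂) (h₂ : s₂ ≤ L)
    (hγ : γ s₁ = γ s₂) :
    deriv (deriv γ) s₁ ∈ Submodule.span ℝ {deriv γ s₁, deriv γ s₂} ∧
      deriv (deriv γ) s₂ ∈ Submodule.span ℝ {deriv γ s₁, deriv γ s₂} := by
  have hd : ∀ t ∈ Icc 0 L, DifferentiableAt ℝ γ t := fun t ht => hmin.1.1.differentiableAt ht
  have hT : ‖deriv γ s₁‖ = ‖deriv γ s₂‖ := by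
    rw [hmin.1.1.unit s₁ ⟨h₀.le, h₁₂.le.trans h₂⟩, hmin.1.1.unit s₂ ⟨(h₀.trans h₁₂).le, h₂⟩]
  have hR := loopSurgeryData_reflection_span h₀.le h₁₂ h₂ hγ
  have hO := loopSurgeryData_reflection_orthogonal_span_add h₀.le h₁₂ h₂ hγ hT
  have hmem₁ := (Submodule.reflection_eq_self_iff _).1 <| by
    simpa using hR.deriv_deriv_left h₀ hC2 hd (H _ (hmin.loopSurgery hR))
      (by simpa using (hC2.contDiffAt (Icc_mem_nhds h₀ (h₁₂.trans_le h₂))).differentiableAt_deriv)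
  refine ⟨hmem₁, ?_⟩
  by_contra hmem₂
  have hswap := hO.deriv_deriv_left h₀ hC2 hd (H _ (hmin.loopSurgery hO)) <| by
    simpa using differentiableAt_of_deriv_ne_zero fun h => hmem₂ (by rw [h]; exact zero_mem _)
  simp only [loopReparam_neg_one, add_sub_cancel_left] at hswap
  exact hmem₂ ((Submodule.reflection_orthogonal_span_add_mem_span_pair_iff hT).1 (hswap ▸ hmem₁))

theorem deriv_deriv_mem_span_of_lt (hmin : IsGlobalMin3 L P0 P1 V0 V1 γ)
    (H : ∀ ξ, IsGlobalMin3 L P0 P1 V0 V1 ξ → ContDiffOn ℝ 2 ξ (Icc 0 L))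
    (hC2 : ContDiffOn ℝ 2 γ (Icc 0 L)) (h₀ : 0 ≤ s₁) (h₁₂ : s₁ < s₂) (h₂ : s₂ < L)
    (hγ : γ s₁ = γ s₂) :
    deriv (deriv γ) s₁ ∈ Submodule.span ℝ {deriv γ s₁, deriv γ s₂} ∧
      deriv (deriv γ) s₂ ∈ Submodule.span ℝ {deriv γ s₁, deriv γ s₂} := by
  have hd : ∀ t ∈ Icc 0 L, DifferentiableAt ℝ γ t := fun t ht => hmin.1.1.differentiableAt ht
  have hT : ‖deriv γ s₁‖ = ‖deriv γ s₂‖ := by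
    rw [hmin.1.1.unit s₁ ⟨h₀, h₁₂.le.trans h₂.le⟩, hmin.1.1.unit s₂ ⟨h₀.trans h₁₂.le, h₂.le⟩]
  have hR := loopSurgeryData_reflection_span h₀ h₁₂ h₂.le hγ
  have hO := loopSurgeryData_reflection_orthogonal_span_add h₀ h₁₂ h₂.le hγ hT
  have hmem₂ := (Submodule.reflection_eq_self_iff _).1 <| by
    simpa using hR.deriv_deriv_right h₂ hC2 hd (H _ (hmin.loopSurgery hR))
      (by simpa using (hC2.contDiffAt (Icc_mem_nhds (h₀.trans_lt h₁₂) h₂)).differentiableAt_deriv)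
  refine ⟨?_, hmem₂⟩
  by_contra hmem₁
  have hswap := hO.deriv_deriv_right h₂ hC2 hd (H _ (hmin.loopSurgery hO)) <| by
    simpa using differentiableAt_of_deriv_ne_zero fun h => hmem₁ (by rw [h]; exact zero_mem _)
  simp only [loopReparam_neg_one, add_sub_cancel_right] at hswap
  exact hmem₁ ((Submodule.reflection_orthogonal_span_add_mem_span_pair_iff hT).1 (hswap ▸ hmem₂))

end IsGlobalMin3

theorem selfIntersection_not_minimal_general (L : ℝ)
    (P0 P1 V0 V1 : R3)
    (H : ∀ ξ, IsGlobalMin3 L P0 P1 V0 V1 ξ → ContDiffOn ℝ 2 ξ (Icc 0 L))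
    (γ : ℝ → R3) (hC2 : ContDiffOn ℝ 2 γ (Icc 0 L))
    (s₁ s₂ : ℝ) (hs₁0 : 0 ≤ s₁) (hs₁₂ : s₁ < s₂) (hs₂L : s₂ ≤ L) (hlen : s₂ - s₁ < L)
    (hself : γ s₁ = γ s₂)
    (hspan : deriv (deriv γ) s₁ ∉ Submodule.span ℝ {deriv γ s₁, deriv γ s₂} ∨
      deriv (deriv γ) s₂ ∉ Submodule.span ℝ {deriv γ s₁, deriv γ s₂}) :
    ¬ IsGlobalMin3 L P0 P1 V0 V1 γ := by
  intro hmin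
  have hinterior : 0 < s₁ ∨ s₂ < L := by
    by_contra! h
    linarith [h.1, h.2]
  obtain ⟨h₁, h₂⟩ := hinterior.elim
    (fun hs₁ => hmin.deriv_deriv_mem_span_of_pos H hC2 hs₁ hs₁₂ hs₂L hself)
    (fun hs₂ => hmin.deriv_deriv_mem_span_of_lt H hC2 hs₁0 hs₁₂ hs₂ hself)
  exact hspan.elim (· h₁) (· h₂)

/-- non-minimality of spatial elasticae with a transversal
self-intersection. -/
theorem selfIntersection_not_minimal (L : ℝ) (hL : 0 < L)
    (P0 P1 V0 V1 : R3) (hPP : ‖P0 - P1‖ < L) (hV0 : ‖V0‖ = 1) (hV1 : ‖V1‖ = 1)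
    (H : ∀ ξ, IsGlobalMin3 L P0 P1 V0 V1 ξ → ContDiffOn ℝ 2 ξ (Icc 0 L))
    (γ : ℝ → R3) (hγ : Adm3 L P0 P1 V0 V1 γ) (hC2 : ContDiffOn ℝ 2 γ (Icc 0 L))
    (s₁ s₂ : ℝ) (hs₁0 : 0 ≤ s₁) (hs₁₂ : s₁ < s₂) (hs₂L : s₂ ≤ L) (hlen : s₂ - s₁ < L)
    (hself : γ s₁ = γ s₂)
    (hspan : deriv (deriv γ) s₁ ∉ Submodule.span ℝ {deriv γ s₁, deriv γ s₂} ∨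
      deriv (deriv γ) s₂ ∉ Submodule.span ℝ {deriv γ s₁, deriv γ s₂}) :
    ¬ IsGlobalMin3 L P0 P1 V0 V1 γ :=
  selfIntersection_not_minimal_general L P0 P1 V0 V1 H γ hC2 s₁ s₂ hs₁0 hs₁₂ hs₂L hlen hself hspan
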